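/- Fix n ≥ 1 and work with complex matrices indexed by bitstrings z : Fin (n+1) → Bool. Define the Bush cost c(z) = 1 if z 0 = true, and c(z) = (number of indices i ∈ {1,…,n} with z i = true) if z 0 = false. Let C be the diagonal matrix with entry c(z) at z, let B' = ∑_{i : Fin (n+1)} X_i be the canonical mixer sum over all n+1 bits, let u be the uniform vector with entries 2^{-(n+1)/2}, and let ψ_f = (Matrix.exp (I·(π/4)·B') * Matrix.exp (-I·(π/2)·C)).mulVec u. Then |‖ψ_f 0‖² - 1/4| ≤ (2:ℝ)^(-(n:ℝ)/2), where 0 is the all-false string; in particular single-round QAOA with angles (π/4, π/2) solves the Bush of implications with success probability at least 1/4 − 2^{-n/2}. -/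

import Mathlib

open Matrix Complex

/-- The bit-flip (Pauli X on qubit `i`) matrix on `m`-bit strings. -/
noncomputable def pauliX (m : ℕ) (i : Fin m) :
    Matrix (Fin m → Bool) (Fin m → Bool) ℂ :=
  Matrix.of fun z z' => if z' = Function.update z i (!(z i)) then 1 else 0

/-- The Bush-of-implications cost on `n+1` bits: `1` if the central bit `z 0`
is set, and otherwise the Hamming weight of the `n` peripheral bits. -/
def bushCost (n : ℕ) (z : Fin (n + 1) → Bool) : ℕ :=
  if z 0 = true then 1
  else (Finset.univ.filter fun i : Fin (n + 1) => i ≠ 0 ∧ z i = true).card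

/-! At `β = π/4` each factor of the mixer is `exp (i π/4 X_j) = (1 + i X_j) / √2`, so the row
of the mixing unitary at the all-false string is `z ↦ 2^{-(n+1)/2} i^{|z|}`, while the phase
separator at `γ = π/2` multiplies the `z`-entry by `(-i)^{c(z)}`. Summing over `z` splits along
the central bit: when it is set, `i · (-i) = 1` leaves `∑_y i^{|y|} = (1 + i)^n`; when it is
clear, `i^{|y|} (-i)^{|y|} = 1` contributes `2^n`. So the amplitude of the all-false string is
`1/2 + (1 + i)^n / 2^{n+1}`, a perturbation of `1/2` of norm `2^{-n/2} / 2`. -/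

open Finset

section Involution

variable {R : Type*}

/-- Evaluation at the spectral projections `(1 ± A) / 2` of an involution `A`. -/
noncomputable def involutionHom [Ring R] [Algebra ℂ R] {A : R} (hA : A * A = 1) :
    ℂ × ℂ →+* R where
  toFun p := ((p.1 + p.2) / 2) • 1 + ((p.1 - p.2) / 2) • A
  map_one' := by norm_num
  map_mul' p q := by
    simp only [add_mul, mul_add, smul_mul_smul_comm, hA, one_mul, mul_one, Prod.fst_mul,
      Prod.snd_mul]
    module
  map_zero' := by norm_num
  map_add' p q := by
    simp only [Prod.fst_add, Prod.snd_add]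
    module

theorem exp_smul_of_mul_self_eq_one [NormedRing R] [NormedAlgebra ℂ R] [Algebra ℚ R] {A : R}
    (hA : A * A = 1) (c : ℂ) :
    NormedSpace.exp (c • A) = cosh c • 1 + sinh c • A := by
  have hcont : Continuous (involutionHom hA) := by
    change Continuous fun p : ℂ × ℂ => ((p.1 + p.2) / 2) • (1 : R) + ((p.1 - p.2) / 2) • A
    fun_prop
  have hexp : NormedSpace.exp (c, -c) = (exp c, exp (-c)) := by
    ext <;> simp [Complex.exp_eq_exp_ℂ]
  calc NormedSpace.exp (c • A) = NormedSpace.exp (involutionHom hA (c, -c)) := by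
        congr 1
        change _ = ((c + -c) / 2) • (1 : R) + ((c - -c) / 2) • A
        module
    _ = involutionHom hA (exp c, exp (-c)) := by rw [← NormedSpace.map_exp _ hcont, hexp]
    _ = cosh c • 1 + sinh c • A := by
        simp only [involutionHom, RingHom.coe_mk, MonoidHom.coe_mk, OneHom.coe_mk, Complex.cosh,
          Complex.sinh]

end Involution

section Mixer

variable {m : ℕ}

theorem pauliX_mul_apply (i : Fin m) (A : Matrix (Fin m → Bool) (Fin m → Bool) ℂ)
    (z z' : Fin m → Bool) :
    (pauliX m i * A) z z' = A (Function.update z i (!z i)) z' := by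
  simp [mul_apply, pauliX]

theorem pauliX_mul_self (i : Fin m) : pauliX m i * pauliX m i = 1 := by
  ext z z'
  rw [pauliX_mul_apply]
  simp [pauliX, one_apply, eq_comm]

theorem pauliX_commute (i j : Fin m) : Commute (pauliX m i) (pauliX m j) := by
  obtain rfl | hij := eq_or_ne i j
  · exact Commute.refl _
  ext z z'
  rw [pauliX_mul_apply, pauliX_mul_apply]
  simp [pauliX, Function.update_comm hij, Function.update_of_ne hij,
    Function.update_of_ne hij.symm]

theorem exp_pauliX (i : Fin m) :
    NormedSpace.exp ((I * ((Real.pi : ℂ) / 4)) • pauliX m i) =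
      ((√2 / 2 : ℝ) : ℂ) • (1 + I • pauliX m i) := by
  open scoped Matrix.Norms.Operator in
  refine (exp_smul_of_mul_self_eq_one (pauliX_mul_self i) _).trans ?_
  rw [mul_comm, cosh_mul_I, sinh_mul_I, ← ofReal_ofNat, ← ofReal_div, ← ofReal_cos,
    ← ofReal_sin, Real.cos_pi_div_four, Real.sin_pi_div_four]
  module

/-- The entries of `∏ i ∈ s, (1 + I • pauliX m i)`. -/
noncomputable def mixerProd (s : Finset (Fin m)) : Matrix (Fin m → Bool) (Fin m → Bool) ℂ :=
  of fun z z' => ∏ i, if z i = z' i then 1 else if i ∈ s then I else 0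

theorem mixerProd_empty : mixerProd (∅ : Finset (Fin m)) = 1 := by
  ext z z'
  obtain rfl | hne := eq_or_ne z z'
  · simp [mixerProd]
  obtain ⟨i, hi⟩ := Function.ne_iff.mp hne
  rw [one_apply_ne hne, mixerProd, of_apply]
  exact prod_eq_zero (mem_univ i) (by simp [hi])

theorem one_add_I_smul_pauliX_mul_mixerProd {j : Fin m} {s : Finset (Fin m)} (hj : j ∉ s) :
    (1 + I • pauliX m j) * mixerProd s = mixerProd (insert j s) := by
  ext z z'
  set rest := ∏ i ∈ {j}ᶜ, if z i = z' i then (1 : ℂ) else if i ∈ s then I else 0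
  have hs : mixerProd s z z' = (if z j = z' j then 1 else 0) * rest := by
    rw [mixerProd, of_apply, Fintype.prod_eq_mul_prod_compl j]
    simp [hj, rest]
  have hflip : mixerProd s (Function.update z j (!z j)) z' =
      (if z j = z' j then 0 else 1) * rest := by
    rw [mixerProd, of_apply, Fintype.prod_eq_mul_prod_compl j]
    congr 1
    · cases z j <;> cases z' j <;> simp [hj]
    · refine prod_congr rfl fun i hi => ?_
      rw [Function.update_of_ne (by simpa using hi)]
  have hinsert : mixerProd (insert j s) z z' = (if z j = z' j then 1 else I) * rest := by
    rw [mixerProd, of_apply, Fintype.prod_eq_mul_prod_compl j]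
    congr 1
    · simp
    · refine prod_congr rfl fun i hi => ?_
      simp [(by simpa using hi : i ≠ j)]
  rw [add_mul, one_mul, smul_mul_assoc, Matrix.add_apply, Matrix.smul_apply, pauliX_mul_apply,
    hs, hflip, hinsert]
  split_ifs <;> ring

theorem exp_smul_sum_pauliX (s : Finset (Fin m)) :
    NormedSpace.exp ((I * ((Real.pi : ℂ) / 4)) • ∑ i ∈ s, pauliX m i) =
      ((√2 / 2 : ℝ) : ℂ) ^ #s • mixerProd s := by
  induction s using Finset.induction_on with
  | empty => simp [mixerProd_empty]
  | insert j s hj ih =>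
    have hcomm : Commute ((I * ((Real.pi : ℂ) / 4)) • pauliX m j)
        ((I * ((Real.pi : ℂ) / 4)) • ∑ i ∈ s, pauliX m i) :=
      ((Commute.sum_right _ _ _ fun i _ => pauliX_commute j i).smul_left _).smul_right _
    rw [sum_insert hj, smul_add, Matrix.exp_add_of_commute _ _ hcomm, ih, exp_pauliX,
      smul_mul_smul_comm, one_add_I_smul_pauliX_mul_mixerProd hj, card_insert_of_notMem hj,
      pow_succ']

theorem mixerProd_univ_apply_false (z : Fin m → Bool) :
    mixerProd univ (fun _ => false) z = ∏ i, if z i then I else 1 := by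
  rw [mixerProd, of_apply]
  refine prod_congr rfl fun i _ => ?_
  cases z i <;> simp

end Mixer

theorem exp_neg_I_pi_div_two_smul_diagonal {ι : Type*} [Fintype ι] [DecidableEq ι]
    (c : ι → ℕ) :
    NormedSpace.exp ((-I * ((Real.pi : ℂ) / 2)) • diagonal fun z => (c z : ℂ)) =
      diagonal fun z => (-I) ^ c z := by
  rw [← diagonal_smul, exp_diagonal]
  congr 1
  funext z
  rw [Pi.coe_exp, Pi.smul_apply, smul_eq_mul, ← Complex.exp_eq_exp_ℂ, mul_comm, exp_nat_mul,
    neg_mul, mul_comm, exp_neg, exp_pi_div_two_mul_I, inv_I]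

theorem bushCost_cons (n : ℕ) (b : Bool) (y : Fin n → Bool) :
    bushCost n (Fin.cons b y) = if b then 1 else #{i | y i} := by
  cases b
  · rw [bushCost, if_neg (by simp), card_filter, card_filter, Fin.sum_univ_succ]
    simp [Fin.succ_ne_zero]
  · simp [bushCost]

theorem sum_prod_ite_I_one (n : ℕ) :
    ∑ y : Fin n → Bool, ∏ i, (if y i then I else 1) = (1 + I) ^ n := by
  rw [← Fintype.prod_sum fun (_ : Fin n) (b : Bool) => if b then I else 1]
  simp [add_comm]

theorem sum_prod_ite_I_one_mul_neg_I_pow_bushCost (n : ℕ) :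
    ∑ z : Fin (n + 1) → Bool, (∏ i, if z i then I else 1) * (-I) ^ bushCost n z =
      2 ^ n + (1 + I) ^ n := by
  have hcentral : ∀ y : Fin n → Bool,
      (I * ∏ i, if y i then I else 1) * (-I) ^ 1 = ∏ i, if y i then I else 1 := by
    intro y
    rw [pow_one, mul_right_comm, mul_neg, I_mul_I, neg_neg, one_mul]
  have hperipheral : ∀ y : Fin n → Bool,
      (1 * ∏ i, if y i then I else 1) * (-I) ^ #{i | y i} = 1 := by
    intro y
    rw [one_mul, ← prod_const, ← prod_filter, ← prod_mul_distrib]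
    exact prod_eq_one fun i _ => by cases y i <;> simp
  rw [← (Fin.consEquiv fun _ => Bool).sum_comp, Fintype.sum_prod_type, Fintype.sum_bool]
  simp only [Fin.consEquiv, Equiv.coe_fn_mk, Fin.prod_univ_succ, Fin.cons_zero, Fin.cons_succ,
    bushCost_cons, if_true, Bool.false_eq_true, if_false, hcentral, hperipheral,
    sum_prod_ite_I_one, sum_const, card_univ, Fintype.card_fun, Fintype.card_bool,
    Fintype.card_fin]
  rw [nsmul_one, Nat.cast_pow, Nat.cast_ofNat, add_comm]

theorem two_rpow_neg_natCast_div_two (k : ℕ) : (2 : ℝ) ^ (-(k : ℝ) / 2) = (√2 / 2) ^ k := by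
  have hhalf : √2 / 2 = (2 : ℝ) ^ (-(1 : ℝ) / 2) := by
    rw [Real.sqrt_eq_rpow, ← Real.rpow_sub_one two_ne_zero]
    norm_num
  rw [hhalf, ← Real.rpow_natCast, ← Real.rpow_mul zero_le_two]
  ring_nf

theorem qaoa1_bush_amplitude (n : ℕ) :
    ((NormedSpace.exp ((I * ((Real.pi : ℂ) / 4)) • ∑ i, pauliX (n + 1) i) *
        NormedSpace.exp ((-I * ((Real.pi : ℂ) / 2)) •
          diagonal fun z => (bushCost n z : ℂ))) *ᵥ
        fun _ => (((2 : ℝ) ^ (-((n : ℝ) + 1) / 2) : ℝ) : ℂ)) (fun _ => false) =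
      1 / 2 + (1 + I) ^ n / 2 ^ (n + 1) := by
  have hu : (2 : ℝ) ^ (-((n : ℝ) + 1) / 2) = (√2 / 2) ^ (n + 1) := by
    exact_mod_cast two_rpow_neg_natCast_div_two (n + 1)
  have hsq : ((√2 / 2 : ℝ) : ℂ) ^ 2 = 1 / 2 := by
    rw [← ofReal_pow, div_pow, Real.sq_sqrt zero_le_two]
    norm_num
  rw [exp_smul_sum_pauliX, exp_neg_I_pi_div_two_smul_diagonal, hu, smul_mul, smul_mulVec,
    Pi.smul_apply, smul_eq_mul]
  simp only [mulVec, dotProduct, mul_diagonal, mixerProd_univ_apply_false]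
  rw [← sum_mul, sum_prod_ite_I_one_mul_neg_I_pow_bushCost, card_univ, Fintype.card_fin,
    ofReal_pow, show ∀ r x : ℂ, r ^ (n + 1) * (x * r ^ (n + 1)) = (r ^ 2) ^ (n + 1) * x from
      fun r x => by ring, hsq, _root_.one_div_pow, pow_succ]
  field_simp

theorem norm_one_add_I_pow_div (n : ℕ) :
    ‖(1 + I) ^ n / 2 ^ (n + 1)‖ = (√2 / 2) ^ n / 2 := by
  have h : ‖1 + I‖ = √2 := by
    rw [Complex.norm_def, normSq_apply]
    norm_num
  rw [norm_div, norm_pow, norm_pow, h, Complex.norm_two, div_pow, pow_succ]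
  ring

theorem abs_norm_add_sq_sub_norm_sq_le {E : Type*} [SeminormedAddCommGroup E] (a w : E) :
    |‖a + w‖ ^ 2 - ‖a‖ ^ 2| ≤ (2 * ‖a‖ + ‖w‖) * ‖w‖ := by
  have hdiff : |‖a + w‖ - ‖a‖| ≤ ‖w‖ := by simpa using abs_norm_sub_norm_le (a + w) a
  have hsum : |‖a + w‖ + ‖a‖| ≤ 2 * ‖a‖ + ‖w‖ := by
    rw [abs_of_nonneg (by positivity)]
    linarith [norm_add_le a w]
  rw [sq_sub_sq, abs_mul]
  exact mul_le_mul hsum hdiff (abs_nonneg _) (by positivity)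

theorem qaoa1_bush_success_general (n : ℕ)
    (B' C : Matrix (Fin (n + 1) → Bool) (Fin (n + 1) → Bool) ℂ)
    (hB' : B' = ∑ i, pauliX (n + 1) i)
    (hC : C = Matrix.diagonal fun z => (bushCost n z : ℂ))
    (u : (Fin (n + 1) → Bool) → ℂ)
    (hu : u = fun _ => (((2 : ℝ) ^ (-((n : ℝ) + 1) / 2) : ℝ) : ℂ))
    (ψf : (Fin (n + 1) → Bool) → ℂ)
    (hψf : ψf = (NormedSpace.exp ((Complex.I * ((Real.pi : ℂ) / 4)) • B') *
        NormedSpace.exp ((-Complex.I * ((Real.pi : ℂ) / 2)) • C)).mulVec u) :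
    |‖ψf (fun _ => false)‖ ^ 2 - 1 / 4| ≤ (2 : ℝ) ^ (-(n : ℝ) / 2) := by
  subst hB' hC hu hψf
  rw [qaoa1_bush_amplitude, two_rpow_neg_natCast_div_two]
  set w : ℂ := (1 + I) ^ n / 2 ^ (n + 1)
  set t : ℝ := (√2 / 2) ^ n
  have ht₀ : 0 ≤ t := by positivity
  have ht₁ : t ≤ 1 :=
    pow_le_one₀ (by positivity) (by nlinarith [Real.sq_sqrt (zero_le_two : (0 : ℝ) ≤ 2)])
  have hhalf : ‖(1 / 2 : ℂ)‖ = 1 / 2 := by norm_num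
  calc |‖1 / 2 + w‖ ^ 2 - 1 / 4| = |‖1 / 2 + w‖ ^ 2 - ‖(1 / 2 : ℂ)‖ ^ 2| := by
        rw [hhalf]
        norm_num
    _ ≤ (2 * ‖(1 / 2 : ℂ)‖ + ‖w‖) * ‖w‖ := abs_norm_add_sq_sub_norm_sq_le _ _
    _ = (1 + t / 2) * (t / 2) := by rw [hhalf, norm_one_add_I_pow_div]; ring
    _ ≤ t := by nlinarith

/-- Single-round QAOA with angles `(π/4, π/2)` solves the Bush of implications
with success probability `1/4 + O(2^{-n/2})`. -/
theorem qaoa1_bush_success (n : ℕ) (hn : 1 ≤ n)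
    (B' C : Matrix (Fin (n + 1) → Bool) (Fin (n + 1) → Bool) ℂ)
    (hB' : B' = ∑ i, pauliX (n + 1) i)
    (hC : C = Matrix.diagonal fun z => (bushCost n z : ℂ))
    (u : (Fin (n + 1) → Bool) → ℂ)
    (hu : u = fun _ => (((2 : ℝ) ^ (-((n : ℝ) + 1) / 2) : ℝ) : ℂ))
    (ψf : (Fin (n + 1) → Bool) → ℂ)
    (hψf : ψf = (NormedSpace.exp ((Complex.I * ((Real.pi : ℂ) / 4)) • B') *
        NormedSpace.exp ((-Complex.I * ((Real.pi : ℂ) / 2)) • C)).mulVec u) :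
    |‖ψf (fun _ => false)‖ ^ 2 - 1 / 4| ≤ (2 : ℝ) ^ (-(n : ℝ) / 2) :=
  qaoa1_bush_success_general n B' C hB' hC u hu ψf hψf
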